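/- arXiv:1712.00810 — 5 statements merged into one kernel-verified Lean document; each statement's English description precedes it below -/
import Mathlib

section
/- Let S be a system of r linear equalities in n real variables. If the vector x* = (x*_1, …, x*_n) is a solution of S such that all entries of x* are nonnegative, then there is a vector y* = (y*_1, …, y*_n) such that: (1) y* is a solution of S; (2) all entries of y* are nonnegative; (3) at most r entries of y* are strictly positive. -/
open Finset in
lemma aux_step (r n : ℕ) (A : Matrix (Fin r) (Fin n) ℝ) (b : Fin r → ℝ)
    (x : Fin n → ℝ) (hsol : A.mulVec x = b) (hnonneg : ∀ i, 0 ≤ x i)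
    (hbig : r < (Finset.univ.filter fun i => 0 < x i).card) :
    ∃ y : Fin n → ℝ, A.mulVec y = b ∧ (∀ i, 0 ≤ y i) ∧
      (Finset.univ.filter fun i => 0 < y i).card <
        (Finset.univ.filter fun i => 0 < x i).card := by
  classical
  set S : Finset (Fin n) := Finset.univ.filter fun i => 0 < x i with hS
  -- columns indexed by S
  set v : S → (Fin r → ℝ) := fun i => fun j => A j i with hv
  have hdep : ¬ LinearIndependent ℝ v := by
    intro h
    have := h.fintype_card_le_finrank
    rw [Module.finrank_fin_fun] at this
    simp [Fintype.card_coe] at this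
    omega
  rw [Fintype.not_linearIndependent_iff] at hdep
  obtain ⟨g, hgsum, i0, hg0⟩ := hdep
  -- wlog some positive coefficient
  obtain ⟨g, hgsum, i0, hg0⟩ :
      ∃ g : S → ℝ, (∑ i, g i • v i = 0) ∧ ∃ i0, 0 < g i0 := by
    rcases lt_or_gt_of_ne hg0 with h | h
    · exact ⟨-g, by simpa using hgsum, i0, by simpa using h⟩
    · exact ⟨g, hgsum, i0, h⟩
  set c : Fin n → ℝ := fun i => if h : i ∈ S then g ⟨i, h⟩ else 0 with hc
  have hczero : ∀ i, i ∉ S → c i = 0 := by intro i hi; simp [hc, hi]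
  have hAc : ∀ j, ∑ i, A j i * c i = 0 := by
    intro j
    have h1 : ∑ i, A j i * c i = ∑ i ∈ S, A j i * c i := by
      rw [← Finset.sum_filter_add_sum_filter_not Finset.univ (· ∈ S)]
      have : ∑ i ∈ Finset.univ.filter (· ∉ S), A j i * c i = 0 := by
        apply Finset.sum_eq_zero
        intro i hi
        rw [hczero i (Finset.mem_filter.mp hi).2]; ring
      rw [this, add_zero]
      congr 1
      ext i
      simp
    rw [h1, ← Finset.sum_attach S (fun i => A j i * c i)]
    have h2 : ∀ i : S, A j i * c i = g i * v i j := by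
      intro i; simp [hc, i.2, hv, mul_comm]
    rw [Finset.sum_congr rfl fun i _ => h2 i]
    have := congrFun hgsum j
    simpa using this
  -- the set of indices with positive c
  set T : Finset (Fin n) := S.filter fun i => 0 < c i with hT
  have hi0T : (i0 : Fin n) ∈ T := by
    simp only [hT, Finset.mem_filter]
    exact ⟨i0.2, by simpa [hc, i0.2] using hg0⟩
  obtain ⟨i1, hi1T, hi1min⟩ := T.exists_min_image (fun i => x i / c i) ⟨i0, hi0T⟩
  have hi1S : i1 ∈ S := (Finset.mem_filter.mp hi1T).1
  have hci1 : 0 < c i1 := (Finset.mem_filter.mp hi1T).2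
  have hxi1 : 0 < x i1 := (Finset.mem_filter.mp hi1S).2
  set t : ℝ := x i1 / c i1 with ht
  have htpos : 0 < t := div_pos hxi1 hci1
  set y : Fin n → ℝ := fun i => x i - t * c i with hy
  have hynn : ∀ i, 0 ≤ y i := by
    intro i
    by_cases hiS : i ∈ S
    · by_cases hcip : 0 < c i
      · have hiT : i ∈ T := Finset.mem_filter.mpr ⟨hiS, hcip⟩
        have := hi1min i hiT
        have : t * c i ≤ x i := by
          rw [ht]
          calc x i1 / c i1 * c i ≤ x i / c i * c i := by
                apply mul_le_mul_of_nonneg_right this hcip.le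
            _ = x i := div_mul_cancel₀ _ hcip.ne'
        simp [hy]; linarith
      · push_neg at hcip
        have : 0 ≤ -(t * c i) := by nlinarith
        have := hnonneg i
        simp [hy]; nlinarith
    · show 0 ≤ x i - t * c i; rw [hczero i hiS]; simpa using hnonneg i
  have hysol : A.mulVec y = b := by
    funext j
    have : (A.mulVec y) j = (A.mulVec x) j - t * ∑ i, A j i * c i := by
      simp only [Matrix.mulVec, dotProduct, hy, Finset.mul_sum]
      rw [← Finset.sum_sub_distrib]
      congr 1; ext i; ring
    rw [this, hAc, hsol]; ring
  refine ⟨y, hysol, hynn, ?_⟩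
  apply Finset.card_lt_card
  constructor
  · intro i hi
    simp only [Finset.mem_filter, Finset.mem_univ, true_and] at hi
    by_contra hxS
    have hx0 : x i = 0 := by
      have h1 : ¬ 0 < x i := fun h => hxS (by simp [hS, h])
      linarith [hnonneg i]
    have hc0 : c i = 0 := hczero i hxS
    rw [hy] at hi
    simp [hx0, hc0] at hi
  · intro hsub
    have : i1 ∈ Finset.univ.filter fun i => 0 < y i := hsub (by simpa [hS] using hxi1)
    simp only [Finset.mem_filter] at this
    have : 0 < y i1 := this.2
    rw [hy] at this
    simp [ht, div_mul_cancel₀ _ hci1.ne'] at this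

/-- Let `S` be a system of `r` linear equalities in `n` real variables, represented
as `A.mulVec x = b` with `A : Matrix (Fin r) (Fin n) ℝ` and `b : Fin r → ℝ`.
If the vector `x*` is a solution of `S` all of whose entries are nonnegative,
then there is a vector `y*` such that:
(1) `y*` is a solution of `S`;
(2) all entries of `y*` are nonnegative;
(3) at most `r` entries of `y*` are strictly positive. -/
theorem small_support_solution_of_linear_equalities
    (r n : ℕ) (A : Matrix (Fin r) (Fin n) ℝ) (b : Fin r → ℝ)
    (x : Fin n → ℝ) (hsol : A.mulVec x = b) (hnonneg : ∀ i, 0 ≤ x i) :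
    ∃ y : Fin n → ℝ,
      A.mulVec y = b ∧
      (∀ i, 0 ≤ y i) ∧
      {i : Fin n | 0 < y i}.ncard ≤ r := by
  classical
  have key : ∀ m (x : Fin n → ℝ), A.mulVec x = b → (∀ i, 0 ≤ x i) →
      (Finset.univ.filter fun i => 0 < x i).card ≤ m →
      ∃ y : Fin n → ℝ, A.mulVec y = b ∧ (∀ i, 0 ≤ y i) ∧
        (Finset.univ.filter fun i => 0 < y i).card ≤ r := by
    intro m
    induction m with
    | zero => intro x hs hn hcard; exact ⟨x, hs, hn, by omega⟩
    | succ m IH =>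
      intro x hs hn hcard
      by_cases hle : (Finset.univ.filter fun i => 0 < x i).card ≤ r
      · exact ⟨x, hs, hn, hle⟩
      · obtain ⟨y, h1, h2, h3⟩ := aux_step r n A b x hs hn (by omega)
        exact IH y h1 h2 (by omega)
  obtain ⟨y, h1, h2, h3⟩ :=
    key (Finset.univ.filter fun i => 0 < x i).card x hsol hnonneg le_rfl
  refine ⟨y, h1, h2, ?_⟩
  have hset : {i : Fin n | 0 < y i} = ↑(Finset.univ.filter fun i => 0 < y i) := by
    ext i; simp
  rw [hset, Set.ncard_coe_finset]
  exact h3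
end

section
/- (Small model property for LPP1.) Let A be an LPP1 formula that is satisfiable, i.e., there exist an LPP1-model M and a world w with M, w ⊨ A. Then A is satisfiable in an LPP1-model M = ⟨U, W, H, μ, v⟩ such that: (1) |U| ≤ 2^{|A|}; (2) for each w ∈ U, W_w = U and H_w = 𝒫(U); (3) for each w ∈ U and every V ⊆ U, μ_w(V) = Σ_{u ∈ V} μ_w({u}). -/
/-- Rationals in the unit interval `ℚ ∩ [0,1]`. -/
abbrev Prob01 : Type := {s : ℚ // 0 ≤ s ∧ s ≤ 1}

/-- The rational `1` as an element of `ℚ ∩ [0,1]`. -/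
def probOne : Prob01 := ⟨1, by norm_num⟩

/-- The formulas of LPP1 (the iterated probabilistic logic over classical
propositional logic): `A ::= p | ¬A | A ∧ A | P_{≥s} A`, `s ∈ ℚ ∩ [0,1]`. -/
inductive LPP1Form : Type where
  | atom : ℕ → LPP1Form
  | neg : LPP1Form → LPP1Form
  | conj : LPP1Form → LPP1Form → LPP1Form
  | geq : Prob01 → LPP1Form → LPP1Form

/-- An LPP1-model `⟨U, W, H, μ, v⟩` (data part): a nonempty set `U` of worlds and,
for each world `w`, a set `W_w ⊆ U`, a family `H_w` of subsets, a set function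
`μ_w`, and an evaluation `v_w`. -/
structure LPP1Model where
  U : Type
  ne : Nonempty U
  Ww : U → Set U
  Hw : U → Set (Set U)
  μw : U → Set U → ℝ
  v : U → ℕ → Bool

/-- Truth at a world: `M, w ⊨ p` iff `v_w(p) = true`; `¬`, `∧` classical;
`M, w ⊨ P_{≥s} A` iff `μ_w([A]_{M,w}) ≥ s`, where `[A]_{M,w} = {u ∈ W_w | M, u ⊨ A}`. -/
def LPP1Form.sat (M : LPP1Model) : LPP1Form → M.U → Prop
  | .atom p, w => M.v w p = true
  | .neg A, w => ¬ LPP1Form.sat M A w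
  | .conj A B, w => LPP1Form.sat M A w ∧ LPP1Form.sat M B w
  | .geq s A, w => (s.1 : ℝ) ≤ M.μw w {u ∈ M.Ww w | LPP1Form.sat M A u}

/-- `[A]_{M,w} = {u ∈ W_w | M, u ⊨ A}`. -/
def LPP1Model.truthSet (M : LPP1Model) (A : LPP1Form) (w : M.U) : Set M.U :=
  {u ∈ M.Ww w | LPP1Form.sat M A u}

/-- `M` is an LPP1-model: for every world `w`, `⟨W_w, H_w, μ_w⟩` is a probability
space (`H_w` a σ-algebra over `W_w`, `μ_w : H_w → [0,1]` σ-additive with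
`μ_w(W_w) = 1`), and `[A]_{M,w} ∈ H_w` for every formula `A` and world `w`. -/
structure IsLPP1Model (M : LPP1Model) : Prop where
  mem_sub : ∀ w : M.U, ∀ V ∈ M.Hw w, V ⊆ M.Ww w
  top_mem : ∀ w : M.U, M.Ww w ∈ M.Hw w
  compl_mem : ∀ w : M.U, ∀ V ∈ M.Hw w, M.Ww w \ V ∈ M.Hw w
  iUnion_mem : ∀ (w : M.U) (f : ℕ → Set M.U),
    (∀ k, f k ∈ M.Hw w) → (⋃ k, f k) ∈ M.Hw w
  nonneg : ∀ w : M.U, ∀ V ∈ M.Hw w, 0 ≤ M.μw w V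
  le_one : ∀ w : M.U, ∀ V ∈ M.Hw w, M.μw w V ≤ 1
  total : ∀ w : M.U, M.μw w (M.Ww w) = 1
  sigma_additive : ∀ (w : M.U) (f : ℕ → Set M.U), (∀ k, f k ∈ M.Hw w) →
    Pairwise (Function.onFun Disjoint f) →
    HasSum (fun k => M.μw w (f k)) (M.μw w (⋃ k, f k))
  meas : ∀ (A : LPP1Form) (w : M.U), M.truthSet A w ∈ M.Hw w

/-- The number of symbols of an LPP1 formula, each probabilistic operator
counting as one symbol. -/
def LPP1Form.size : LPP1Form → ℕ
  | .atom _ => 1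
  | .neg A => A.size + 1
  | .conj A B => A.size + B.size + 1
  | .geq _ A => A.size + 1

/-!
Filtration through the subformulas of `A`: worlds satisfying the same subformulas of `A` are
identified, which leaves at most `2 ^ |A|` classes. At the class of `w` (a fixed representative)
the new measure is the image of `μ_w` on `W_w` under the class map. Each class is a finite Boolean
combination of truth sets, hence measurable, so this image is a probability measure on the finite
set of classes. By induction on subformulas, a world and its class satisfy the same subformulas
of `A`: in the case `P_{≥s} B` the worlds whose class satisfies `B` are exactly those in `[B]_{M,w}`.
-/

open Set Classical

namespace LPP1Form

noncomputable def subformulas : LPP1Form → Finset LPP1Form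
  | .atom p => {.atom p}
  | .neg B => insert (.neg B) B.subformulas
  | .conj B C => insert (.conj B C) (B.subformulas ∪ C.subformulas)
  | .geq s B => insert (.geq s B) B.subformulas

theorem mem_subformulas_self (B : LPP1Form) : B ∈ B.subformulas := by
  cases B <;> simp [subformulas]

theorem card_subformulas_le (B : LPP1Form) : B.subformulas.card ≤ B.size := by
  induction B with
  | atom p => simp [subformulas, size]
  | neg B ih =>
    grw [subformulas, Finset.card_insert_le, ih, size]
  | conj B C ihB ihC =>
    grw [subformulas, Finset.card_insert_le, Finset.card_union_le, ihB, ihC, size]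
  | geq s B ih =>
    grw [subformulas, Finset.card_insert_le, ih, size]

end LPP1Form

namespace IsLPP1Model

variable {M : LPP1Model}

theorem empty_mem (hM : IsLPP1Model M) (w : M.U) : ∅ ∈ M.Hw w := by
  simpa using hM.compl_mem w _ (hM.top_mem w)

theorem μw_empty (hM : IsLPP1Model M) (w : M.U) : M.μw w ∅ = 0 :=
  summable_const_iff _ |>.1 (hM.sigma_additive w (fun _ => ∅) (fun _ => hM.empty_mem w)
    fun _ _ _ => disjoint_bot_left).summable

theorem iUnion_mem_of_countable (hM : IsLPP1Model M) (w : M.U) {ι : Sort*} [Countable ι]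
    {S : ι → Set M.U} (hS : ∀ i, S i ∈ M.Hw w) : ⋃ i, S i ∈ M.Hw w := by
  cases isEmpty_or_nonempty ι
  · simpa using hM.empty_mem w
  · obtain ⟨f, hf⟩ := exists_surjective_nat ι
    rw [← hf.iUnion_comp]
    exact hM.iUnion_mem w _ fun k => hS (f k)

theorem inter_iInter_mem (hM : IsLPP1Model M) (w : M.U) {ι : Sort*} [Countable ι]
    {S : ι → Set M.U} (hS : ∀ i, M.Ww w ∩ S i ∈ M.Hw w) : M.Ww w ∩ ⋂ i, S i ∈ M.Hw w := by
  have h : M.Ww w ∩ ⋂ i, S i = M.Ww w \ ⋃ i, M.Ww w \ (M.Ww w ∩ S i) := by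
    ext u
    simp only [mem_inter_iff, mem_iInter, mem_sdiff, mem_iUnion, not_exists]
    grind
  rw [h]
  exact hM.compl_mem w _ (hM.iUnion_mem_of_countable w fun i => hM.compl_mem w _ (hS i))

theorem μw_eq_finsum_singleton (hM : IsLPP1Model M) (w : M.U) [Countable M.U]
    (hH : M.Hw w = univ) {V : Set M.U} (hV : V.Finite) :
    M.μw w V = ∑ᶠ u ∈ V, M.μw w {u} := by
  obtain ⟨e, he⟩ := exists_injective_nat M.U
  -- `S (e u)` is `{u}` or `∅`, which turns σ-additivity over `ℕ` into a finite sum over `V`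
  set S : ℕ → Set M.U := fun k => {u ∈ V | e u = k}
  have hS : ∀ u, M.μw w (S (e u)) = V.indicator (fun u => M.μw w {u}) u := by
    intro u
    by_cases hu : u ∈ V
    · rw [indicator_of_mem hu]; congr; ext u'; simp [S, he.eq_iff]; exact fun h => h ▸ hu
    · rw [indicator_of_notMem hu, ← hM.μw_empty w]; congr; ext u'
      simp [S, he.eq_iff]; exact fun h he => hu (he ▸ h)
  have hsum := hM.sigma_additive w S (fun _ => hH ▸ trivial)
    fun i j hij => disjoint_left.2 fun u hi hj => hij (hi.2.symm.trans hj.2)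
  have hUnion : ⋃ k, S k = V := by ext u; simp [S]
  rw [hUnion, ← he.hasSum_iff] at hsum
  · rw [finsum_mem_def, ← hsum.tsum_eq, tsum_eq_finsum]
    · exact finsum_congr hS
    · exact hV.subset fun u hu => by_contra fun hV => hu (by simp [hS, hV])
  · intro k hk
    rw [← hM.μw_empty w]; congr; ext u
    simp only [S, mem_ofPred_eq, mem_empty_iff_false, iff_false, not_and]
    exact fun _ hu => hk ⟨u, hu⟩

end IsLPP1Model

namespace LPP1Model

variable (M : LPP1Model) (A : LPP1Form)

def profile (u : M.U) : A.subformulas → Prop := fun B => LPP1Form.sat M B u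

noncomputable def filtration : LPP1Model where
  U := range (M.profile A)
  ne := M.ne.map (rangeFactorization _)
  Ww _ := univ
  Hw _ := univ
  μw x V := M.μw (rangeSplitting _ x) (M.Ww (rangeSplitting _ x) ∩ rangeFactorization _ ⁻¹' V)
  v x := M.v (rangeSplitting _ x)

variable {M A}

instance : Finite (M.filtration A).U := inferInstanceAs (Finite (range _))

theorem sat_rangeSplitting_iff (u : M.U) {B : LPP1Form} (hB : B ∈ A.subformulas) :
    LPP1Form.sat M B (rangeSplitting _ (rangeFactorization (M.profile A) u)) ↔
      LPP1Form.sat M B u :=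
  Iff.of_eq (congrFun (apply_rangeSplitting (M.profile A) _) ⟨B, hB⟩)

theorem sat_filtration_iff :
    ∀ B : LPP1Form, B.subformulas ⊆ A.subformulas → ∀ u : M.U,
      (LPP1Form.sat (M.filtration A) B (rangeFactorization _ u) ↔ LPP1Form.sat M B u)
  | .atom p, hB, u => sat_rangeSplitting_iff u (hB (LPP1Form.mem_subformulas_self _))
  | .neg B, hB, u =>
    not_congr (sat_filtration_iff B ((Finset.subset_insert _ _).trans hB) u)
  | .conj B C, hB, u =>
    have hBC := (Finset.subset_insert _ _).trans hB
    and_congr (sat_filtration_iff B (Finset.subset_union_left.trans hBC) u)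
      (sat_filtration_iff C (Finset.subset_union_right.trans hBC) u)
  | .geq s B, hB, u => by
    refine Iff.trans ?_ (sat_rangeSplitting_iff u (hB (LPP1Form.mem_subformulas_self _)))
    have ih := sat_filtration_iff B ((Finset.subset_insert _ _).trans hB)
    simp only [LPP1Form.sat, filtration]
    congr! 3
    ext u'
    exact and_congr_right fun _ => (and_iff_right trivial).trans (ih u')

theorem card_filtration_le : Nat.card (M.filtration A).U ≤ 2 ^ A.size :=
  calc Nat.card (M.filtration A).U ≤ Nat.card (A.subformulas → Prop) := Finite.card_subtype_le _
    _ = 2 ^ A.subformulas.card := by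
      rw [Nat.card_fun, Nat.card_eq_fintype_card, Fintype.card_prop, Nat.card_eq_finsetCard]
    _ ≤ 2 ^ A.size := Nat.pow_le_pow_right two_pos A.card_subformulas_le

end LPP1Model

namespace IsLPP1Model

variable {M : LPP1Model}

theorem inter_preimage_profile_mem (hM : IsLPP1Model M) (A : LPP1Form) (w : M.U)
    (S : Set (A.subformulas → Prop)) : M.Ww w ∩ M.profile A ⁻¹' S ∈ M.Hw w := by
  have hclass : ∀ x, M.Ww w ∩ M.profile A ⁻¹' {x} ∈ M.Hw w := by
    intro x
    have hx : M.profile A ⁻¹' {x} = ⋂ B, {u | LPP1Form.sat M B.1 u ↔ x B} := by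
      ext u; simp [LPP1Model.profile, funext_iff]
    rw [hx]
    refine hM.inter_iInter_mem w fun B => ?_
    by_cases hB : x B
    · simp only [hB, iff_true]
      exact hM.meas B.1 w
    · convert hM.compl_mem w _ (hM.meas B.1 w) using 1
      ext u
      simp [hB, LPP1Model.truthSet]
  rw [← biUnion_preimage_singleton, inter_iUnion₂]
  exact hM.iUnion_mem_of_countable w fun x => hM.iUnion_mem_of_countable w fun _ => hclass x

theorem filtration (hM : IsLPP1Model M) (A : LPP1Form) : IsLPP1Model (M.filtration A) := by
  have hmeas : ∀ w V, M.Ww w ∩ rangeFactorization (M.profile A) ⁻¹' V ∈ M.Hw w := by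
    intro w V
    have hV : rangeFactorization (M.profile A) ⁻¹' V = M.profile A ⁻¹' (Subtype.val '' V) := by
      ext u; simp [rangeFactorization]
    exact hV ▸ hM.inter_preimage_profile_mem A w _
  exact {
    mem_sub := fun _ _ _ => subset_univ _
    top_mem := fun _ => mem_univ _
    compl_mem := fun _ _ _ => mem_univ _
    iUnion_mem := fun _ _ _ => mem_univ _
    nonneg := fun _ V _ => hM.nonneg _ _ (hmeas _ V)
    le_one := fun _ V _ => hM.le_one _ _ (hmeas _ V)
    total := fun x => (congrArg _ (inter_univ _)).trans (hM.total (rangeSplitting _ x))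
    sigma_additive := fun (x : range (M.profile A)) (f : ℕ → Set (range (M.profile A))) _ hf => by
      have h := hM.sigma_additive (rangeSplitting _ x) _ (fun k => hmeas _ (f k))
        fun i j hij => ((hf hij).preimage _).mono inter_subset_right inter_subset_right
      rwa [← inter_iUnion, ← preimage_iUnion] at h
    meas := fun _ _ => mem_univ _ }

end IsLPP1Model

/-- **Small model property for LPP1.**
If an LPP1 formula `A` is satisfiable (there are an LPP1-model `M` and a world `w`
with `M, w ⊨ A`), then `A` is satisfiable in an LPP1-model `M = ⟨U, W, H, μ, v⟩`
such that:
(1) `|U| ≤ 2^{|A|}`;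
(2) for each `w ∈ U`, `W_w = U` and `H_w = 𝒫(U)`;
(3) for each `w ∈ U` and every `V ⊆ U`, `μ_w(V) = Σ_{u ∈ V} μ_w({u})`. -/
theorem lpp1_small_model_property (A : LPP1Form)
    (hsat : ∃ M : LPP1Model, IsLPP1Model M ∧ ∃ w : M.U, LPP1Form.sat M A w) :
    ∃ M : LPP1Model, IsLPP1Model M ∧ (∃ w : M.U, LPP1Form.sat M A w) ∧
      (Finite M.U ∧ Nat.card M.U ≤ 2 ^ A.size) ∧
      (∀ w : M.U, M.Ww w = Set.univ ∧ M.Hw w = Set.univ) ∧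
      (∀ (w : M.U) (V : Set M.U), M.μw w V = ∑ᶠ u ∈ V, M.μw w {u}) := by
  obtain ⟨M, hM, w, hw⟩ := hsat
  refine ⟨M.filtration A, hM.filtration A, ?_, ⟨inferInstance, M.card_filtration_le⟩,
    fun _ => ⟨rfl, rfl⟩, fun x V => ?_⟩
  · exact ⟨_, (LPP1Model.sat_filtration_iff A subset_rfl w).2 hw⟩
  · exact (hM.filtration A).μw_eq_finsum_singleton x rfl V.toFinite
end

section
/- Let M_D = ⟨U, R, v⟩ be a finite serial Kripke model. Define the structure M_PPL = ⟨U, W, H, μ, v'⟩ by: for every w ∈ U, W_w = R[w], H_w = 𝒫(W_w), μ_w(V) = |V| / |R[w]| for V ⊆ W_w, and v'_w = v_w. Then M_PPL is an LPP1-model, and for every world w ∈ U and every modal formula B: M_D, w ⊨ B if and only if M_PPL, w ⊨ f(B), where f is the translation replacing every occurrence of □ with P_{≥1}. -/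
/-- Modal formulas: `A ::= p | ¬A | A ∧ A | □A`. -/
inductive ModalForm : Type where
  | atom : ℕ → ModalForm
  | neg : ModalForm → ModalForm
  | conj : ModalForm → ModalForm → ModalForm
  | box : ModalForm → ModalForm

/-- A Kripke model `⟨W, R, v⟩`: a nonempty set of worlds, an accessibility
relation, and a truth assignment at each world. -/
structure KripkeModel where
  W : Type
  ne : Nonempty W
  R : W → W → Prop
  v : W → ℕ → Bool

/-- Truth in a Kripke model: `M, w ⊨ p` iff `v_w(p) = true`; `¬`, `∧` classical;
`M, w ⊨ □B` iff `M, u ⊨ B` for all `u ∈ R[w]`. -/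
def ModalForm.sat (M : KripkeModel) : ModalForm → M.W → Prop
  | .atom p, w => M.v w p = true
  | .neg A, w => ¬ ModalForm.sat M A w
  | .conj A B, w => ModalForm.sat M A w ∧ ModalForm.sat M B w
  | .box A, w => ∀ u : M.W, M.R w u → ModalForm.sat M A u

/-- A Kripke model is serial if `R[w] ≠ ∅` for every world `w`. -/
def KripkeModel.Serial (M : KripkeModel) : Prop := ∀ w : M.W, ∃ u : M.W, M.R w u

/-- The translation `f` from modal formulas to LPP1-formulas, replacing every
occurrence of `□` with `P_{≥1}`. -/
def boxToProb : ModalForm → LPP1Form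
  | .atom p => .atom p
  | .neg A => .neg (boxToProb A)
  | .conj A B => .conj (boxToProb A) (boxToProb B)
  | .box A => .geq probOne (boxToProb A)

/-- The structure `M_PPL` built from a Kripke model `D`: for every `w`,
`W_w = R[w]`, `H_w = 𝒫(W_w)`, `μ_w(V) = |V| / |R[w]|`, and `v'_w = v_w`. -/
noncomputable def toLPP1Model (D : KripkeModel) : LPP1Model where
  U := D.W
  ne := D.ne
  Ww := fun w => {u | D.R w u}
  Hw := fun w => {V | V ⊆ {u | D.R w u}}
  μw := fun w V => (Nat.card V : ℝ) / (Nat.card {u | D.R w u} : ℝ)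
  v := D.v

/-! `μ_w` is the uniform distribution on `R[w]`, which is finite and, by seriality, nonempty; with
`H_w` the full powerset every truth set is measurable and σ-additivity is that of the counting
measure. For `V ⊆ R[w]`, `μ_w(V) ≥ 1` holds exactly when `V = R[w]`, so `P_{≥1}` evaluates like
`□`, and the equivalence follows by induction on the formula. -/

open MeasureTheory Function

lemma hasSum_ncard_iUnion {α : Type*} [Finite α] {f : ℕ → Set α}
    (hd : Pairwise (Disjoint on f)) :
    HasSum (fun k => ((f k).ncard : ℝ)) ((⋃ k, f k).ncard) := by
  let _ : MeasurableSpace α := ⊤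
  have hcount (s : Set α) : (Measure.count s).toReal = s.ncard := by
    rw [Measure.count_apply_finite' s.toFinite MeasurableSpace.measurableSet_top,
      Set.ncard_eq_toFinset_card s]
    simp
  have hunion := measure_iUnion (μ := Measure.count) hd fun _ => MeasurableSpace.measurableSet_top
  have hfin : ∑' k, Measure.count (f k) ≠ ⊤ := hunion ▸ measure_ne_top _ _
  have hsum := ENNReal.hasSum_toReal hfin
  rw [← ENNReal.tsum_toReal_eq (ENNReal.ne_top_of_tsum_ne_top hfin), ← hunion] at hsum
  simpa only [hcount] using hsum

lemma one_le_ncard_sep_div_ncard_iff {α : Type*} {S : Set α} (hS : S.Finite)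
    (hne : S.Nonempty) (p : α → Prop) :
    (1 : ℝ) ≤ ({u ∈ S | p u}.ncard : ℝ) / S.ncard ↔ ∀ u ∈ S, p u := by
  rw [one_le_div (by exact_mod_cast (Set.ncard_pos hS).mpr hne), Nat.cast_le,
    ← Set.sep_eq_self_iff_mem_true]
  exact ⟨fun h => Set.eq_of_subset_of_ncard_le (Set.sep_subset S p) h hS, fun h => by rw [h]⟩

lemma KripkeModel.Serial.ncard_pos {D : KripkeModel} [Finite D.W] (hser : D.Serial) (w : D.W) :
    0 < {u | D.R w u}.ncard :=
  (Set.ncard_pos (Set.toFinite _)).mpr (hser w)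

lemma toLPP1Model_μw (D : KripkeModel) (w : (toLPP1Model D).U) (V : Set (toLPP1Model D).U) :
    (toLPP1Model D).μw w V = (V.ncard : ℝ) / {u : D.W | D.R w u}.ncard := by
  simp only [toLPP1Model, Nat.card_coe_set_eq]

theorem isLPP1Model_toLPP1Model {D : KripkeModel} [Finite D.W] (hser : D.Serial) :
    IsLPP1Model (toLPP1Model D) := by
  have hcard (w : D.W) : (0 : ℝ) < {u | D.R w u}.ncard := by exact_mod_cast hser.ncard_pos w
  exact
    { mem_sub := fun _ _ hV => hV
      top_mem := fun _ _ hu => hu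
      compl_mem := fun _ _ _ => Set.sdiff_subset
      iUnion_mem := fun _ _ hf => Set.iUnion_subset hf
      nonneg := fun w V _ => by rw [toLPP1Model_μw]; positivity
      le_one := fun w V hV => by
        rw [toLPP1Model_μw]
        exact div_le_one_of_le₀ (by exact_mod_cast Set.ncard_le_ncard hV) (hcard w).le
      total := fun w => by rw [toLPP1Model_μw]; exact div_self (hcard w).ne'
      sigma_additive := fun w f _ hd => by
        simp only [toLPP1Model_μw]
        exact (hasSum_ncard_iUnion (α := D.W) hd).div_const _
      meas := fun _ _ _ hu => hu.1 }

theorem sat_boxToProb_iff {D : KripkeModel} [Finite D.W] (hser : D.Serial) (B : ModalForm)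
    (w : D.W) : LPP1Form.sat (toLPP1Model D) (boxToProb B) w ↔ ModalForm.sat D B w := by
  induction B generalizing w with
  | atom p => rfl
  | neg A ih => exact not_congr (ih w)
  | conj A B ihA ihB => exact and_congr (ihA w) (ihB w)
  | box A ih =>
    have hone : ((probOne.1 : ℚ) : ℝ) = 1 := by simp [probOne]
    simp only [boxToProb, LPP1Form.sat, ModalForm.sat, hone, toLPP1Model_μw D w]
    exact (one_le_ncard_sep_div_ncard_iff (Set.toFinite {u | D.R w u}) (hser w) _).trans
      (forall₂_congr fun u _ => ih u)

/-- Let `M_D = ⟨U, R, v⟩` be a finite serial Kripke model and let `M_PPL` be the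
structure defined by `W_w = R[w]`, `H_w = 𝒫(W_w)`, `μ_w(V) = |V|/|R[w]|`,
`v'_w = v_w`. Then `M_PPL` is an LPP1-model, and for every world `w` and every
modal formula `B`: `M_D, w ⊨ B` iff `M_PPL, w ⊨ f(B)`, where `f` replaces every
occurrence of `□` with `P_{≥1}`. -/
theorem serial_kripke_to_lpp1 (D : KripkeModel) (hfin : Finite D.W)
    (hser : D.Serial) :
    IsLPP1Model (toLPP1Model D) ∧
      ∀ (w : D.W) (B : ModalForm),
        ModalForm.sat D B w ↔ LPP1Form.sat (toLPP1Model D) (boxToProb B) w :=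
  ⟨isLPP1Model_toLPP1Model hser, fun w B => (sat_boxToProb_iff hser B w).symm⟩
end

section
/- Let M = ⟨U, W, H, μ, v⟩ be a finite LPP1-model such that for each w ∈ U, W_w = U, H_w = 𝒫(U), and μ_w(V) = Σ_{u ∈ V} μ_w({u}) for all V ⊆ U. Define the Kripke model M_D = ⟨U, R, v'⟩ where R[w] = {u ∈ U | μ_w({u}) > 0} and v'_w is the restriction of v_w to Prop. Then M_D is a serial Kripke model, and for every world w ∈ U and every modal formula B: M, w ⊨ f(B) if and only if M_D, w ⊨ B, where f is the translation replacing every occurrence of □ with P_{≥1}. -/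
/-- The Kripke model `M_D` built from an LPP1-model `M`: `R[w] = {u | μ_w({u}) > 0}`
and `v'_w` is the restriction of `v_w` to the atomic propositions. -/
def toKripkeModel (M : LPP1Model) : KripkeModel where
  W := M.U
  ne := M.ne
  R := fun w u => 0 < M.μw w {u}
  v := M.v

/-- Let `M` be a finite LPP1-model such that for each `w`: `W_w = U`, `H_w = 𝒫(U)`,
and `μ_w(V) = Σ_{u ∈ V} μ_w({u})` for all `V ⊆ U`. Define the Kripke model
`M_D = ⟨U, R, v'⟩` with `R[w] = {u ∈ U | μ_w({u}) > 0}` and `v'_w = v_w`.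
Then `M_D` is a serial Kripke model, and for every world `w` and modal formula `B`:
`M, w ⊨ f(B)` iff `M_D, w ⊨ B`, where `f` replaces `□` with `P_{≥1}`. -/
theorem lpp1_to_serial_kripke (M : LPP1Model) (hM : IsLPP1Model M)
    (hfin : Finite M.U)
    (hW : ∀ w : M.U, M.Ww w = Set.univ)
    (hH : ∀ w : M.U, M.Hw w = Set.univ)
    (hμ : ∀ (w : M.U) (V : Set M.U), M.μw w V = ∑ᶠ u ∈ V, M.μw w {u}) :
    (toKripkeModel M).Serial ∧
      ∀ (w : M.U) (B : ModalForm),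
        LPP1Form.sat M (boxToProb B) w ↔ ModalForm.sat (toKripkeModel M) B w := by
  classical
  haveI := Fintype.ofFinite M.U
  -- singleton measures are nonnegative
  have hnn : ∀ (w u : M.U), 0 ≤ M.μw w {u} := by
    intro w u
    exact hM.nonneg w {u} (by rw [hH]; trivial)
  -- measure as a Finset sum
  have hsum : ∀ (w : M.U) (V : Set M.U),
      M.μw w V = ∑ u ∈ V.toFinset, M.μw w {u} := by
    intro w V
    rw [hμ w V, ← Set.coe_toFinset V, finsum_mem_coe_finset]
    simp
  have htot : ∀ w : M.U, ∑ u : M.U, M.μw w {u} = 1 := by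
    intro w
    have := hM.total w
    rw [hW w, hsum w Set.univ] at this
    simpa using this
  -- key lemma
  have key : ∀ (w : M.U) (V : Set M.U),
      (1 : ℝ) ≤ M.μw w V ↔ ∀ u, 0 < M.μw w {u} → u ∈ V := by
    intro w V
    rw [hsum w V]
    constructor
    · intro h u hu
      by_contra hne
      have hmem : u ∈ V.toFinsetᶜ := by simp [hne]
      have h1 : ∑ x ∈ V.toFinset, M.μw w {x} + ∑ x ∈ V.toFinsetᶜ, M.μw w {x} = 1 := by
        rw [Finset.sum_add_sum_compl]; exact htot w
      have h2 : M.μw w {u} ≤ ∑ x ∈ V.toFinsetᶜ, M.μw w {x} :=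
        Finset.single_le_sum (fun i _ => hnn w i) hmem
      have h3 : ∑ x ∈ V.toFinset, M.μw w {x} ≤ 1 - M.μw w {u} := by linarith
      linarith
    · intro h
      have hz : ∀ x ∈ V.toFinsetᶜ, M.μw w {x} = 0 := by
        intro x hx
        rcases lt_or_eq_of_le (hnn w x) with hpos | heq
        · exact absurd (Set.mem_toFinset.mpr (h x hpos)) (Finset.mem_compl.mp hx)
        · exact heq.symm
      have h1 : ∑ x ∈ V.toFinset, M.μw w {x} + ∑ x ∈ V.toFinsetᶜ, M.μw w {x} = 1 := by
        rw [Finset.sum_add_sum_compl]; exact htot w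
      rw [Finset.sum_eq_zero hz] at h1
      linarith
  constructor
  · -- seriality
    intro w
    by_contra h
    push_neg at h
    have : ∑ u : M.U, M.μw w {u} = 0 :=
      Finset.sum_eq_zero fun u _ => le_antisymm (not_lt.mp (h u)) (hnn w u)
    rw [htot w] at this
    norm_num at this
  · intro w B
    induction B generalizing w with
    | atom p => simp [LPP1Form.sat, ModalForm.sat, boxToProb, toKripkeModel]
    | neg A ih => simp only [LPP1Form.sat, ModalForm.sat, boxToProb]; rw [ih w]
    | conj A B ihA ihB =>
        simp only [LPP1Form.sat, ModalForm.sat, boxToProb]; rw [ihA w, ihB w]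
    | box A ih =>
        simp only [LPP1Form.sat, ModalForm.sat, boxToProb, probOne]
        rw [hW w]
        have := key w {u | LPP1Form.sat M (boxToProb A) u}
        constructor
        · intro h u hu
          have h' : (1:ℝ) ≤ M.μw w {u | u ∈ (Set.univ : Set M.U) ∧ LPP1Form.sat M (boxToProb A) u} := by
            push_cast at h; exact h
          have h'' : (1:ℝ) ≤ M.μw w {u | LPP1Form.sat M (boxToProb A) u} := by
            convert h' using 2; ext x; simp
          exact (ih u).mp ((this.mp h'') u hu)
        · intro h
          have h'' : (1:ℝ) ≤ M.μw w {u | LPP1Form.sat M (boxToProb A) u} :=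
            this.mpr fun u hu => (ih u).mpr (h u hu)
          have : (1:ℝ) ≤ M.μw w {u | u ∈ (Set.univ : Set M.U) ∧ LPP1Form.sat M (boxToProb A) u} := by
            convert h'' using 2; ext x; simp
          push_cast
          exact this
end

section
/- For every modal formula A: A is satisfiable in a serial Kripke model (i.e., A is D-satisfiable) if and only if f(A) is satisfiable in an LPP1-model, where f is the translation replacing every occurrence of □ with P_{≥1}. -/
/-!
Both directions build a model of the other kind on the same worlds.

From an LPP1-model, let `u` be accessible from `w` when `u ∈ W_w` and `u` satisfies `f(B)` for
every subformula `B` with `P_{≥1} f(B)` true at `w`. These are finitely many conditions of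
probability one, so almost every `u` in the sense of `μ_w` is accessible: the model is serial, and
`□B` and `P_{≥1} f(B)` agree at every world.

From a serial Kripke model, let `w` keep, for each subformula `B`, one successor falsifying `B`
if there is one (any successor otherwise), and spread probability over these finitely many
successors. A set then has probability one iff it contains all of them, and these successors
refute every `□B` that fails at `w`.
-/

open MeasureTheory

namespace IsLPP1Model

variable {M : LPP1Model} (hM : IsLPP1Model M) (w : M.U)
include hM

theorem empty_mem_s11 : ∅ ∈ M.Hw w := by
  simpa using hM.compl_mem w _ (hM.top_mem w)

theorem μw_empty_s11 : M.μw w ∅ = 0 := by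
  have h := hM.sigma_additive w (fun _ => ∅) (fun _ => hM.empty_mem_s11 w)
    fun _ _ _ => disjoint_bot_left
  rw [Set.iUnion_empty] at h
  exact (summable_const_iff _).1 h.summable

/-- The σ-algebra `H_w`, extended from `W_w` to all of `U` by taking traces. -/
@[reducible] def measurableSpace : MeasurableSpace M.U where
  MeasurableSet' V := V ∩ M.Ww w ∈ M.Hw w
  measurableSet_empty := by simpa using hM.empty_mem_s11 w
  measurableSet_compl V hV := by
    convert hM.compl_mem w _ hV using 1
    ext; simp; tauto
  measurableSet_iUnion f hf := by
    rw [Set.iUnion_inter]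
    exact hM.iUnion_mem w _ hf

noncomputable def measure : @Measure M.U (hM.measurableSpace w) :=
  letI := hM.measurableSpace w
  Measure.ofMeasurable (fun V _ => ENNReal.ofReal (M.μw w (V ∩ M.Ww w)))
    (by simp [hM.μw_empty_s11 w]) fun f hf hd => by
      have hsum := hM.sigma_additive w (fun i => f i ∩ M.Ww w) hf
        fun i j hij => (hd hij).mono Set.inter_subset_left Set.inter_subset_left
      rw [Set.iUnion_inter, ← hsum.tsum_eq,
        ENNReal.ofReal_tsum_of_nonneg (fun i => hM.nonneg w _ (hf i)) hsum.summable]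

theorem measurableSet_of_mem {V : Set M.U} (hV : V ∈ M.Hw w) :
    MeasurableSet[hM.measurableSpace w] V := by
  show V ∩ M.Ww w ∈ M.Hw w
  rwa [Set.inter_eq_left.2 (hM.mem_sub w V hV)]

theorem measure_apply {V : Set M.U} (hV : V ∈ M.Hw w) :
    hM.measure w V = ENNReal.ofReal (M.μw w V) := by
  let := hM.measurableSpace w
  rw [measure, Measure.ofMeasurable_apply _ (hM.measurableSet_of_mem w hV),
    Set.inter_eq_left.2 (hM.mem_sub w V hV)]

theorem isProbabilityMeasure : IsProbabilityMeasure (hM.measure w) := by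
  let := hM.measurableSpace w
  constructor
  rw [measure, Measure.ofMeasurable_apply _ MeasurableSet.univ, Set.univ_inter, hM.total,
    ENNReal.ofReal_one]

theorem one_le_μw_iff_ae {V : Set M.U} (hV : V ∈ M.Hw w) :
    1 ≤ M.μw w V ↔ ∀ᵐ u ∂hM.measure w, u ∈ V := by
  have := hM.isProbabilityMeasure w
  rw [ae_mem_iff_measure_eq (hM.measurableSet_of_mem w hV).nullMeasurableSet, measure_univ,
    hM.measure_apply w hV, ENNReal.ofReal_eq_one]
  exact ⟨(hM.le_one w V hV).antisymm, ge_of_eq⟩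

end IsLPP1Model

theorem LPP1Form.sat_geq_probOne {M : LPP1Model} {F : LPP1Form} {w : M.U} :
    LPP1Form.sat M (.geq probOne F) w ↔ 1 ≤ M.μw w (M.truthSet F w) := by
  simp [LPP1Form.sat, probOne, LPP1Model.truthSet]

def ModalForm.subformulas : ModalForm → List ModalForm
  | .atom p => [.atom p]
  | .neg A => .neg A :: A.subformulas
  | .conj A B => .conj A B :: (A.subformulas ++ B.subformulas)
  | .box A => .box A :: A.subformulas

theorem ModalForm.mem_subformulas_self (A : ModalForm) : A ∈ A.subformulas := by
  cases A <;> simp [subformulas]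

namespace LPP1Model

def toKripke (M : LPP1Model) (L : List ModalForm) : KripkeModel where
  W := M.U
  ne := M.ne
  R w u := u ∈ M.Ww w ∧ ∀ B ∈ L, LPP1Form.sat M (boxToProb (.box B)) w →
    LPP1Form.sat M (boxToProb B) u
  v := M.v

variable {M : LPP1Model} (hM : IsLPP1Model M) (L : List ModalForm)
include hM

theorem ae_toKripke_rel (w : M.U) : ∀ᵐ u ∂hM.measure w, (M.toKripke L).R w u := by
  refine Filter.Eventually.and ?_ ((Filter.eventually_all_finite L.finite_toSet).2 fun B _ => ?_)
  · exact (hM.one_le_μw_iff_ae w (hM.top_mem w)).1 (hM.total w).ge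
  · refine Filter.eventually_imp_distrib_left.2 fun hBw => ?_
    have hfull := (hM.one_le_μw_iff_ae w (hM.meas _ w)).1 (LPP1Form.sat_geq_probOne.1 hBw)
    exact hfull.mono fun u hu => hu.2

theorem toKripke_serial : (M.toKripke L).Serial := fun w =>
  (ae_neBot.2 (hM.isProbabilityMeasure w).ne_zero).nonempty_of_mem (ae_toKripke_rel hM L w)

theorem sat_toKripke_iff {B : ModalForm} (hB : B.subformulas ⊆ L) (w : M.U) :
    ModalForm.sat (M.toKripke L) B w ↔ LPP1Form.sat M (boxToProb B) w := by
  induction B generalizing w with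
  | atom p => rfl
  | neg B ih => exact not_congr (ih (List.cons_subset.1 hB).2 w)
  | conj B C ihB ihC =>
    obtain ⟨hB, hC⟩ := List.append_subset.1 (List.cons_subset.1 hB).2
    exact and_congr (ihB hB w) (ihC hC w)
  | box B ih =>
    have hBL : B.subformulas ⊆ L := (List.cons_subset.1 hB).2
    constructor
    · intro hbox
      refine LPP1Form.sat_geq_probOne.2 ((hM.one_le_μw_iff_ae w (hM.meas _ w)).2 ?_)
      filter_upwards [ae_toKripke_rel hM L w] with u hu
      exact ⟨hu.1, (ih hBL u).1 (hbox u hu)⟩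
    · intro hw u hu
      exact (ih hBL u).2 (hu.2 B (hBL B.mem_subformulas_self) hw)

end LPP1Model

theorem PMF.toOuterMeasure_apply_le_one {α : Type*} (p : PMF α) (s : Set α) :
    p.toOuterMeasure s ≤ 1 :=
  (p.toOuterMeasure.mono (Set.subset_univ s)).trans_eq
    ((p.toOuterMeasure_apply_eq_one_iff _).2 (Set.subset_univ _))

namespace LPP1Model

variable {U : Type} [Nonempty U] (v : U → ℕ → Bool) (p : U → PMF U)

@[reducible] noncomputable def ofPMF : LPP1Model where
  U := U
  ne := ‹_›
  Ww _ := Set.univ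
  Hw _ := Set.univ
  μw w V := ((p w).toOuterMeasure V).toReal
  v := v

theorem isLPP1Model_ofPMF : IsLPP1Model (ofPMF v p) where
  mem_sub _ V _ := Set.subset_univ V
  top_mem _ := trivial
  compl_mem _ _ _ := trivial
  iUnion_mem _ _ _ := trivial
  nonneg _ _ _ := ENNReal.toReal_nonneg
  le_one w V _ := ENNReal.toReal_le_of_le_ofReal zero_le_one <| by
    simpa using (p w).toOuterMeasure_apply_le_one V
  total w := by
    dsimp only
    rw [(p w).toOuterMeasure_apply_eq_one_iff _ |>.2 (Set.subset_univ _), ENNReal.toReal_one]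
  sigma_additive w f _ hd := by
    have hfin V : (p w).toOuterMeasure V ≠ ⊤ :=
      ne_top_of_le_ne_top ENNReal.one_ne_top ((p w).toOuterMeasure_apply_le_one V)
    have hunion := (p w).toOuterMeasure.iUnion_eq_of_caratheodory
      (fun i => (p w).toOuterMeasure_caratheodory ▸ MeasurableSpace.measurableSet_top) hd
    dsimp only
    rw [hunion, ENNReal.tsum_toReal_eq fun i => hfin _]
    exact ENNReal.hasSum_toReal (hunion ▸ hfin _)
  meas _ _ := trivial

theorem ofPMF_sat_geq_probOne_iff {F : LPP1Form} {w : U} :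
    LPP1Form.sat (ofPMF v p) (.geq probOne F) w ↔
      (p w).support ⊆ {u | LPP1Form.sat (ofPMF v p) F u} := by
  rw [LPP1Form.sat_geq_probOne, LPP1Model.truthSet, Set.sep_univ,
    ← PMF.toOuterMeasure_apply_eq_one_iff]
  have hle := (p w).toOuterMeasure_apply_le_one {u | LPP1Form.sat (ofPMF v p) F u}
  constructor
  · intro h
    refine le_antisymm hle ?_
    simpa using (ENNReal.ofReal_le_iff_le_toReal (ne_top_of_le_ne_top ENNReal.one_ne_top hle)).2 h
  · intro h
    simp [h]

end LPP1Model

namespace KripkeModel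

variable {D : KripkeModel} (hD : D.Serial)

open Classical in
noncomputable def witness (w : D.W) (B : ModalForm) : D.W :=
  if h : ∃ u, D.R w u ∧ ¬ ModalForm.sat D B u then h.choose else (hD w).choose

theorem rel_witness (w : D.W) (B : ModalForm) : D.R w (witness hD w B) := by
  unfold witness
  split_ifs with h
  exacts [h.choose_spec.1, (hD w).choose_spec]

theorem not_sat_witness {w : D.W} {B : ModalForm} (h : ∃ u, D.R w u ∧ ¬ ModalForm.sat D B u) :
    ¬ ModalForm.sat D B (witness hD w B) := by
  rw [witness, dif_pos h]
  exact h.choose_spec.2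

variable {L : List ModalForm} (hL : L ≠ [])

noncomputable def toLPP1 : LPP1Model :=
  have := D.ne
  LPP1Model.ofPMF D.v fun w => PMF.ofMultiset (L.map (witness hD w)) (by simpa using hL)

theorem isLPP1Model_toLPP1 : IsLPP1Model (toLPP1 hD hL) :=
  have := D.ne
  LPP1Model.isLPP1Model_ofPMF _ _

theorem sat_toLPP1_iff {B : ModalForm} (hB : B.subformulas ⊆ L) (w : D.W) :
    LPP1Form.sat (toLPP1 hD hL) (boxToProb B) w ↔ ModalForm.sat D B w := by
  induction B generalizing w with
  | atom p => rfl
  | neg B ih => exact not_congr (ih (List.cons_subset.1 hB).2 w)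
  | conj B C ihB ihC =>
    obtain ⟨hB, hC⟩ := List.append_subset.1 (List.cons_subset.1 hB).2
    exact and_congr (ihB hB w) (ihC hC w)
  | box B ih =>
    have hBL : B.subformulas ⊆ L := (List.cons_subset.1 hB).2
    have := D.ne
    refine (LPP1Model.ofPMF_sat_geq_probOne_iff _ _).trans ?_
    simp only [Set.subset_def, PMF.mem_support_ofMultiset_iff, Multiset.mem_toFinset,
      Multiset.mem_coe, List.mem_map, forall_exists_index, and_imp, forall_apply_eq_imp_iff₂]
    constructor
    · intro h u hu
      by_contra hnot
      exact not_sat_witness hD ⟨u, hu, hnot⟩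
        ((ih hBL _).1 (h B (hBL B.mem_subformulas_self)))
    · intro h C _
      exact (ih hBL _).2 (h _ (rel_witness hD w C))

end KripkeModel

/-- For every modal formula `A`: `A` is satisfiable in a serial Kripke model
(`A` is D-satisfiable) if and only if `f(A)` is satisfiable in an LPP1-model,
where `f` replaces every occurrence of `□` with `P_{≥1}`. -/
theorem d_satisfiable_iff_lpp1_satisfiable (A : ModalForm) :
    (∃ D : KripkeModel, D.Serial ∧ ∃ w : D.W, ModalForm.sat D A w) ↔
    (∃ M : LPP1Model, IsLPP1Model M ∧ ∃ w : M.U, LPP1Form.sat M (boxToProb A) w) := by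
  have hA : A.subformulas ⊆ A.subformulas := List.Subset.refl _
  constructor
  · rintro ⟨D, hD, w, hw⟩
    have hL : A.subformulas ≠ [] := List.ne_nil_of_mem A.mem_subformulas_self
    exact ⟨_, D.isLPP1Model_toLPP1 hD hL, w, (D.sat_toLPP1_iff hD hL hA w).2 hw⟩
  · rintro ⟨M, hM, w, hw⟩
    exact ⟨_, M.toKripke_serial hM _, w, (M.sat_toKripke_iff hM _ hA w).2 hw⟩
end
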